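/- Let Ω ⊂ ℝ^N be a bounded open set with smooth (C²) boundary. Then for a ≥ 0, the integral ∫_Ω dist(x, ∂Ω)^{-a} dx is finite if a < 1. -/

import Mathlib

/-!
Write `d = infDist · ∂Ω`. Since `f` is `C¹` and vanishes on `∂Ω`, `|f| ≤ L d` on `Ω`, so the
layer `{0 < d < s}` lies in `{|f| ≤ L s}`, and for `s` small even in a neighbourhood `U` of the
compact set `∂Ω`. Cover `∂Ω` by finitely many balls, on each of which some directional derivative
`∂_e f` is bounded below by `c > 0`. By the mean value theorem every line in direction `e` meets
`{|f| ≤ t}` inside such a ball in a segment of length at most `2t/c`, so by Fubini over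
`(ℝ ∙ e)ᗮ` the volume of `{|f| ≤ t} ∩ U` is `O(t)`. Hence `vol {d^{-a} > t} = O(t^{-1/a})`,
which is integrable at infinity because `1/a > 1`, and the layer-cake formula concludes.
-/

open MeasureTheory Metric Set
open scoped ENNReal NNReal

theorem Real.volume_le_ofReal_of_forall_sub_le {T : Set ℝ} {w : ℝ}
    (h : ∀ s₁ ∈ T, ∀ s₂ ∈ T, s₁ ≤ s₂ → s₂ - s₁ ≤ w) : volume T ≤ ENNReal.ofReal w := by
  refine (Real.volume_le_diam T).trans (ediam_le fun s₁ h₁ s₂ h₂ => ?_)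
  rw [edist_dist, Real.dist_eq]
  refine ENNReal.ofReal_le_ofReal ?_
  rcases le_total s₁ s₂ with h12 | h21
  · rw [abs_sub_comm, abs_of_nonneg (sub_nonneg.2 h12)]
    exact h s₁ h₁ s₂ h₂ h12
  · rw [abs_of_nonneg (sub_nonneg.2 h21)]
    exact h s₂ h₂ s₁ h₁ h21

section NormedSpace

variable {F : Type*} [NormedAddCommGroup F] [NormedSpace ℝ F]

theorem ContinuousLinearMap.exists_norm_eq_one_pos {φ : F →L[ℝ] ℝ} (hφ : φ ≠ 0) :
    ∃ e : F, ‖e‖ = 1 ∧ 0 < φ e := by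
  obtain ⟨v, hv⟩ : ∃ v, 0 < φ v := by
    obtain ⟨v, hv⟩ := DFunLike.ne_iff.1 hφ
    rcases (show φ v ≠ 0 from hv).lt_or_gt with h | h
    · exact ⟨-v, by simpa using h⟩
    · exact ⟨v, h⟩
  have hv0 : v ≠ 0 := by
    rintro rfl
    simp at hv
  exact ⟨‖v‖⁻¹ • v, norm_smul_inv_norm hv0, by rw [map_smul, smul_eq_mul]; positivity⟩

theorem volume_lineSlice_abs_le_le {f : F → ℝ} (hf : Differentiable ℝ f) {z e : F} {r c : ℝ}
    (hc : 0 < c) (hder : ∀ y ∈ ball z r, c ≤ fderiv ℝ f y e) (t : ℝ) (x : F) :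
    volume {s : ℝ | s • e + x ∈ {y ∈ ball z r | |f y| ≤ t}} ≤ ENNReal.ofReal (2 * t / c) := by
  set line : ℝ → F := fun s => s • e + x
  set D := line ⁻¹' ball z r
  have hline : ∀ s, HasDerivAt line e s := fun s => by
    simpa only [id, one_smul] using ((hasDerivAt_id s).smul_const e).add_const x
  have hD : IsOpen D := isOpen_ball.preimage (by fun_prop)
  have hDconv : Convex ℝ D := by
    have hDline : D = AffineMap.lineMap x (x + e) ⁻¹' ball z r := by
      ext s
      simp [D, line, AffineMap.lineMap_apply]
    exact hDline ▸ (convex_ball z r).affine_preimage _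
  have hgrowth : ∀ s₁ ∈ D, ∀ s₂ ∈ D, s₁ ≤ s₂ →
      c * (s₂ - s₁) ≤ f (line s₂) - f (line s₁) := by
    have hderiv : ∀ s, HasDerivAt (f ∘ line) (fderiv ℝ f (line s) e) s := fun s =>
      (hf (line s)).hasFDerivAt.comp_hasDerivAt s (hline s)
    refine hDconv.mul_sub_le_image_sub_of_le_deriv
      (fun s _ => (hderiv s).continuousAt.continuousWithinAt)
      (fun s _ => (hderiv s).differentiableAt.differentiableWithinAt) fun s hs => ?_
    rw [hD.interior_eq] at hs
    rw [(hderiv s).deriv]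
    exact hder _ hs
  refine Real.volume_le_ofReal_of_forall_sub_le fun s₁ h₁ s₂ h₂ h12 => ?_
  rw [le_div_iff₀ hc, mul_comm]
  have := hgrowth s₁ h₁.1 s₂ h₂.1 h12
  linarith [abs_le.1 h₁.2, abs_le.1 h₂.2]

end NormedSpace

section InnerProductSpace

variable {E : Type*} [NormedAddCommGroup E] [InnerProductSpace ℝ E] [FiniteDimensional ℝ E]
  [MeasurableSpace E] [BorelSpace E]

theorem volume_le_mul_of_volume_lineSlice_le {S : Set E} (hS : MeasurableSet S) {e : E}
    (he : ‖e‖ = 1) {z : E} {r : ℝ} (hSr : S ⊆ ball z r) {w : ℝ≥0∞}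
    (hw : ∀ x, volume {s : ℝ | s • e + x ∈ S} ≤ w) :
    volume S ≤ w * volume (ball (0 : (ℝ ∙ e)ᗮ) r) := by
  set K := ℝ ∙ e
  -- the orthogonal decomposition `E ≃ K × Kᗮ` centred at `z`
  let T := K.measurableEquivProd z
  have hT : MeasurePreserving T.symm volume volume := by
    have := K.measurePreserving_measurableEquivProd z
    rw [InnerProductSpace.euclideanHausdorffMeasure_eq_volume] at this
    exact this.symm
  have hproj : ∀ q : K × Kᗮ, T.symm q ∈ S → q.2 ∈ ball 0 r := by
    intro q hq
    have h2 : (T (T.symm q)).2 = q.2 := by rw [T.apply_symm_apply]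
    rw [mem_ball_zero_iff, ← h2, Submodule.measurableEquivProd_apply]
    exact (Kᗮ.norm_orthogonalProjectionOnto_apply_le _).trans_lt (mem_ball_iff_norm.1 (hSr hq))
  have hslice : ∀ v : Kᗮ, volume {u : K | T.symm (u, v) ∈ S} ≤ w := by
    intro v
    have hmeas : MeasurableSet {u : K | T.symm (u, v) ∈ S} :=
      hS.preimage (T.symm.measurable.comp measurable_prodMk_right)
    rw [← (LinearIsometryEquiv.toSpanUnitSingleton e he).measurePreserving.measure_preimage
      hmeas.nullMeasurableSet]
    convert hw ((v : E) + z) using 2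
    ext s
    simp only [T, Set.preimage, LinearIsometryEquiv.toSpanUnitSingleton_apply,
      Submodule.measurableEquivProd_symm_apply, vadd_eq_add, add_assoc]
    exact Iff.rfl
  calc volume S = volume (T.symm ⁻¹' S) := (hT.measure_preimage hS.nullMeasurableSet).symm
    _ = ∫⁻ v, volume {u : K | T.symm (u, v) ∈ S} := by
        rw [Measure.volume_eq_prod, Measure.prod_apply_symm (T.symm.measurable hS)]
        rfl
    _ ≤ ∫⁻ v, (ball (0 : Kᗮ) r).indicator (fun _ => w) v := by
        refine lintegral_mono fun v => ?_
        by_cases hv : v ∈ ball (0 : Kᗮ) r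
        · simpa [indicator_of_mem hv] using hslice v
        · have hempty : {u : K | T.symm (u, v) ∈ S} = ∅ :=
            eq_empty_iff_forall_notMem.2 fun u hu => hv (hproj (u, v) hu)
          rw [indicator_of_notMem hv, hempty, measure_empty]
    _ = w * volume (ball (0 : Kᗮ) r) := lintegral_indicator_const measurableSet_ball w

theorem volume_ball_abs_le_le {f : E → ℝ} (hf : Differentiable ℝ f) {z e : E} (he : ‖e‖ = 1)
    {r c : ℝ} (hc : 0 < c) (hder : ∀ y ∈ ball z r, c ≤ fderiv ℝ f y e) (t : ℝ) :
    volume {y ∈ ball z r | |f y| ≤ t} ≤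
      ENNReal.ofReal (2 * t / c) * volume (ball (0 : (ℝ ∙ e)ᗮ) r) :=
  volume_le_mul_of_volume_lineSlice_le
    (measurableSet_ball.inter (measurableSet_le hf.continuous.abs.measurable measurable_const))
    he (sep_subset _ _) (volume_lineSlice_abs_le_le hf hc hder t)

theorem exists_ball_volume_abs_le_le {f : E → ℝ} (hf : ContDiff ℝ 1 f) {z : E}
    (hz : fderiv ℝ f z ≠ 0) :
    ∃ ρ > 0, ∃ C : ℝ≥0∞, C ≠ ∞ ∧
      ∀ t, volume {y ∈ ball z ρ | |f y| ≤ t} ≤ ENNReal.ofReal t * C := by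
  obtain ⟨e, he, hze⟩ := ContinuousLinearMap.exists_norm_eq_one_pos hz
  have hopen : IsOpen {y | fderiv ℝ f z e / 2 < fderiv ℝ f y e} :=
    isOpen_lt continuous_const ((hf.continuous_fderiv one_ne_zero).clm_apply continuous_const)
  obtain ⟨ρ, hρ, hball⟩ := Metric.isOpen_iff.1 hopen z (half_lt_self hze)
  refine ⟨ρ, hρ, ENNReal.ofReal (2 / (fderiv ℝ f z e / 2)) * volume (ball (0 : (ℝ ∙ e)ᗮ) ρ),
    ENNReal.mul_ne_top ENNReal.ofReal_ne_top measure_ball_lt_top.ne, fun t => ?_⟩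
  calc volume {y ∈ ball z ρ | |f y| ≤ t}
      ≤ ENNReal.ofReal (2 * t / (fderiv ℝ f z e / 2)) * volume (ball (0 : (ℝ ∙ e)ᗮ) ρ) :=
        volume_ball_abs_le_le (hf.differentiable one_ne_zero) he (by linarith)
          (fun y hy => (hball hy).le) t
    _ = _ := by
        rw [← mul_assoc, ← ENNReal.ofReal_mul' (by positivity)]
        ring_nf

theorem IsCompact.exists_isOpen_volume_abs_le_le {K : Set E} (hK : IsCompact K) {f : E → ℝ}
    (hf : ContDiff ℝ 1 f) (hgrad : ∀ z ∈ K, fderiv ℝ f z ≠ 0) :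
    ∃ U, IsOpen U ∧ K ⊆ U ∧ ∃ C : ℝ≥0∞, C ≠ ∞ ∧
      ∀ t, volume {y ∈ U | |f y| ≤ t} ≤ ENNReal.ofReal t * C := by
  choose! ρ hρ C hC hball using fun z hz => exists_ball_volume_abs_le_le hf (hgrad z hz)
  obtain ⟨I, hIK, hKI⟩ := hK.elim_nhds_subcover (fun z => ball z (ρ z))
    fun z hz => ball_mem_nhds z (hρ z hz)
  refine ⟨⋃ z ∈ I, ball z (ρ z), isOpen_biUnion fun _ _ => isOpen_ball, hKI, ∑ z ∈ I, C z,
    ENNReal.sum_ne_top.2 fun z hz => hC z (hIK z hz), fun t => ?_⟩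
  calc volume {y ∈ ⋃ z ∈ I, ball z (ρ z) | |f y| ≤ t}
      ≤ volume (⋃ z ∈ I, {y ∈ ball z (ρ z) | |f y| ≤ t}) := measure_mono fun y ⟨hy, ht⟩ => by
        obtain ⟨z, hz, hyz⟩ := mem_iUnion₂.1 hy
        exact mem_iUnion₂.2 ⟨z, hz, hyz, ht⟩
    _ ≤ ∑ z ∈ I, volume {y ∈ ball z (ρ z) | |f y| ≤ t} := measure_biUnion_finset_le _ _
    _ ≤ ∑ z ∈ I, ENNReal.ofReal t * C z := Finset.sum_le_sum fun z hz => hball z (hIK z hz) t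
    _ = ENNReal.ofReal t * ∑ z ∈ I, C z := (Finset.mul_sum _ _ _).symm

end InnerProductSpace

theorem LipschitzOnWith.abs_le_mul_infDist {X : Type*} [PseudoMetricSpace X] {f : X → ℝ}
    {s K : Set X} {L : ℝ≥0} (hf : LipschitzOnWith L f s) (hK : IsCompact K) (hKne : K.Nonempty)
    (hKs : K ⊆ s) (hK0 : ∀ y ∈ K, f y = 0) {x : X} (hx : x ∈ s) :
    |f x| ≤ L * infDist x K := by
  obtain ⟨y, hy, hxy⟩ := hK.exists_infDist_eq_dist hKne x
  rw [hxy, ← sub_zero (f x), ← hK0 y hy, ← Real.dist_eq]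
  exact hf.dist_le_mul x hx y (hKs hy)

section LayerCake

variable {X : Type*} [MeasurableSpace X] {μ : Measure X}

theorem integrable_of_meas_lt_le_rpow [IsFiniteMeasure μ] {f : X → ℝ} (hf0 : 0 ≤ f)
    (hf : AEMeasurable f μ) {q T : ℝ} (hq : q < -1) (hT : 0 < T) {C : ℝ≥0∞} (hC : C ≠ ∞)
    (hdist : ∀ t ∈ Ioi T, μ {x | t < f x} ≤ ENNReal.ofReal (t ^ q) * C) :
    Integrable f μ := by
  refine ⟨hf.aestronglyMeasurable, (hasFiniteIntegral_iff_ofReal (ae_of_all _ hf0)).2 ?_⟩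
  rw [lintegral_eq_lintegral_meas_lt μ (ae_of_all _ hf0) hf, ← Ioc_union_Ioi_eq_Ioi hT.le]
  refine (lintegral_union_le _ _ _).trans_lt (ENNReal.add_lt_top.2 ⟨?_, ?_⟩)
  · calc ∫⁻ t in Ioc 0 T, μ {x | t < f x}
        ≤ ∫⁻ _ in Ioc 0 T, μ univ := lintegral_mono fun t => measure_mono (subset_univ _)
      _ = μ univ * volume (Ioc 0 T) := setLIntegral_const _ _
      _ < ∞ := ENNReal.mul_lt_top (measure_lt_top μ univ) (by simp)
  · calc ∫⁻ t in Ioi T, μ {x | t < f x}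
        ≤ ∫⁻ t in Ioi T, ENNReal.ofReal (t ^ q) * C := setLIntegral_mono' measurableSet_Ioi hdist
      _ = (∫⁻ t in Ioi T, ENNReal.ofReal (t ^ q)) * C := lintegral_mul_const' C _ hC
      _ < ∞ := ENNReal.mul_lt_top (integrableOn_Ioi_rpow_of_lt hq hT).lintegral_lt_top hC.lt_top

theorem integrableOn_rpow_neg_of_measure_lt_le {Ω : Set X} (hΩ : μ Ω ≠ ∞) {g : X → ℝ}
    (hg0 : ∀ x, 0 ≤ g x) (hg : Measurable g) {s₀ : ℝ} (hs₀ : 0 < s₀) {C : ℝ≥0∞} (hC : C ≠ ∞)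
    (hsmall : ∀ s ∈ Ioc 0 s₀, μ {x ∈ Ω | 0 < g x ∧ g x < s} ≤ ENNReal.ofReal s * C)
    {a : ℝ} (ha0 : 0 ≤ a) (ha1 : a < 1) :
    IntegrableOn (fun x => g x ^ (-a)) Ω μ := by
  rcases ha0.eq_or_lt with rfl | ha
  · simp only [neg_zero, Real.rpow_zero]
    exact integrableOn_const hΩ
  have : IsFiniteMeasure (μ.restrict Ω) := isFiniteMeasure_restrict.2 hΩ
  have hq : (-a)⁻¹ < 0 := inv_lt_zero.2 (neg_neg_of_pos ha)
  refine integrable_of_meas_lt_le_rpow (fun x => Real.rpow_nonneg (hg0 x) _)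
    (hg.pow_const _).aemeasurable (q := (-a)⁻¹) ?_ (Real.rpow_pos_of_pos hs₀ (-a)) hC
    fun t ht => ?_
  · rw [inv_neg, neg_lt_neg_iff]
    exact (one_lt_inv₀ ha).2 ha1
  have ht0 : 0 < t := (Real.rpow_pos_of_pos hs₀ _).trans ht
  have hsub : {x | t < g x ^ (-a)} ∩ Ω ⊆ {x ∈ Ω | 0 < g x ∧ g x < t ^ (-a)⁻¹} := by
    rintro x ⟨hx, hxΩ⟩
    -- `0 ^ (-a) = 0` for `a ≠ 0`, so zeros of `g` never reach the superlevel set.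
    have hgx : 0 < g x := by
      refine (hg0 x).lt_of_ne fun h => ?_
      rw [mem_ofPred_eq, ← h, Real.zero_rpow (neg_ne_zero.2 ha.ne')] at hx
      exact ht0.not_gt hx
    refine ⟨hxΩ, hgx, ?_⟩
    have := Real.rpow_lt_rpow_of_neg ht0 hx hq
    rwa [Real.rpow_rpow_inv (hg0 x) (neg_ne_zero.2 ha.ne')] at this
  have hts₀ : t ^ (-a)⁻¹ ≤ s₀ :=
    calc t ^ (-a)⁻¹ ≤ (s₀ ^ (-a)) ^ (-a)⁻¹ :=
          Real.rpow_le_rpow_of_nonpos (Real.rpow_pos_of_pos hs₀ _) ht.le hq.le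
      _ = s₀ := Real.rpow_rpow_inv hs₀.le (neg_ne_zero.2 ha.ne')
  rw [Measure.restrict_apply (measurableSet_lt measurable_const (hg.pow_const _))]
  exact (measure_mono hsub).trans (hsmall _ ⟨Real.rpow_pos_of_pos ht0 _, hts₀⟩)

end LayerCake

theorem stmt_4_general {N : ℕ} (Ω : Set (EuclideanSpace ℝ (Fin N)))
    (hΩbdd : Bornology.IsBounded Ω)
    (f : EuclideanSpace ℝ (Fin N) → ℝ) (hf : ContDiff ℝ 2 f)
    (hfr : frontier Ω = {x | f x = 0})
    (hgrad : ∀ x ∈ frontier Ω, fderiv ℝ f x ≠ 0)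
    (a : ℝ) (ha0 : 0 ≤ a) (ha1 : a < 1) :
    MeasureTheory.IntegrableOn
      (fun x => (Metric.infDist x (frontier Ω)) ^ (-a)) Ω
      MeasureTheory.volume := by
  have hF : IsCompact (frontier Ω) :=
    hΩbdd.isCompact_closure.of_isClosed_subset isClosed_frontier frontier_subset_closure
  obtain ⟨U, hU, hFU, C, hC, hUC⟩ :=
    hF.exists_isOpen_volume_abs_le_le (hf.of_le one_le_two) hgrad
  obtain ⟨δ, hδ, hδU⟩ := hF.exists_thickening_subset_open hU hFU
  obtain ⟨R, hR⟩ := hΩbdd.closure.subset_closedBall 0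
  obtain ⟨L, hL⟩ := hf.contDiffOn.exists_lipschitzOnWith two_ne_zero (convex_closedBall 0 R)
    (isCompact_closedBall 0 R)
  refine integrableOn_rpow_neg_of_measure_lt_le hΩbdd.measure_lt_top.ne
    (fun x => infDist_nonneg) (continuous_infDist_pt _).measurable hδ
    (C := ENNReal.ofReal L * C) (ENNReal.mul_ne_top ENNReal.ofReal_ne_top hC)
    (fun s hs => ?_) ha0 ha1
  calc volume {x ∈ Ω | 0 < infDist x (frontier Ω) ∧ infDist x (frontier Ω) < s}
      ≤ volume {y ∈ U | |f y| ≤ L * s} := measure_mono fun x ⟨hxΩ, hd0, hds⟩ => by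
        have hFne : (frontier Ω).Nonempty :=
          nonempty_iff_ne_empty.2 fun h => hd0.ne' (by rw [h, infDist_empty])
        refine ⟨hδU ((mem_thickening_iff_infDist_lt hFne).2 (hds.trans_le hs.2)), ?_⟩
        calc |f x| ≤ L * infDist x (frontier Ω) :=
              hL.abs_le_mul_infDist hF hFne (frontier_subset_closure.trans hR)
                (fun y hy => by rw [hfr] at hy; exact hy) (hR (subset_closure hxΩ))
          _ ≤ L * s := by gcongr
    _ ≤ ENNReal.ofReal (L * s) * C := hUC _
    _ = ENNReal.ofReal s * (ENNReal.ofReal L * C) := by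
        rw [ENNReal.ofReal_mul L.coe_nonneg, ← mul_assoc, mul_comm (ENNReal.ofReal L)]

theorem stmt_4 {N : ℕ} (Ω : Set (EuclideanSpace ℝ (Fin N)))
    (hΩopen : IsOpen Ω) (hΩbdd : Bornology.IsBounded Ω)
    (f : EuclideanSpace ℝ (Fin N) → ℝ) (hf : ContDiff ℝ 2 f)
    (hΩf : Ω = {x | f x < 0}) (hfr : frontier Ω = {x | f x = 0})
    (hgrad : ∀ x ∈ frontier Ω, fderiv ℝ f x ≠ 0)
    (a : ℝ) (ha0 : 0 ≤ a) (ha1 : a < 1) :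
    MeasureTheory.IntegrableOn
      (fun x => (Metric.infDist x (frontier Ω)) ^ (-a)) Ω
      MeasureTheory.volume :=
  stmt_4_general Ω hΩbdd f hf hfr hgrad a ha0 ha1
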